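/- arXiv:1911.01855 — 2 statements merged into one kernel-verified Lean document; each statement's English description precedes it below -/
import Mathlib

section
/- Let P be a probability distribution on ℝ^s with mean zero, covariance equal to the identity matrix I, and support contained in the closed ball of radius B. Let R be a symmetric s×s real matrix, 0 < d < n, σ = √(d(n−d)/n), ν(x,x̃) = 1 + ((n−2d)/(nσ))·xᵀRx̃ − (1/n)(xᵀRx̃)², and Σ̃(x) = E_{X₀∼P}[ν(x,X₀)·X₀X₀ᵀ]. Then for every x with ‖x‖ ≤ B, ‖Σ̃(x) − I‖ ≤ B²·(B²‖R‖/σ + B⁴‖R‖²/n), where ‖·‖ denotes the operator norm. In particular Σ̃(x) = I + O(σ⁻¹ + n⁻¹) uniformly over x in the support of P. -/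
/-!
Because the unweighted second-moment matrix of `P` is `I`, `Σ̃(x) − I` is the second-moment
matrix of `P` weighted by `ν(x, ·) − 1`. A second-moment matrix `M` weighted by a function `f`
with `|f| ≤ K`, of a law supported in the ball of radius `B`, has operator norm at most `B²K`,
since `M v = E[f(X₀) ⟪X₀, v⟫ X₀]`. Finally, for `‖x‖, ‖X₀‖ ≤ B` we have `|xᵀRX₀| ≤ B²‖R‖` and
`|n − 2d| ≤ n`, so `|ν(x, X₀) − 1| ≤ B²‖R‖/σ + B⁴‖R‖²/n`.
-/

open Matrix MeasureTheory

/-- The ℓ²→ℓ² operator norm of a square real matrix. -/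
noncomputable def matOpNorm {s : ℕ} (M : Matrix (Fin s) (Fin s) ℝ) : ℝ :=
  ‖Matrix.toEuclideanCLM (𝕜 := ℝ) M‖

open scoped RealInnerProductSpace

noncomputable def weightedSecondMoment {ι : Type*} [Fintype ι]
    (P : Measure (EuclideanSpace ℝ ι)) (f : EuclideanSpace ℝ ι → ℝ) : Matrix ι ι ℝ :=
  Matrix.of fun i j => ∫ x, f x * (x i * x j) ∂P

section WeightedSecondMoment

variable {ι : Type*} [Fintype ι] {P : Measure (EuclideanSpace ℝ ι)}
  {f g : EuclideanSpace ℝ ι → ℝ} {K B : ℝ}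

theorem integrable_mul_coord_mul_coord [IsFiniteMeasure P] (hf : AEStronglyMeasurable f P)
    (hfK : ∀ᵐ x ∂P, |f x| ≤ K) (hB : ∀ᵐ x ∂P, ‖x‖ ≤ B) (i j : ι) :
    Integrable (fun x => f x * (x i * x j)) P := by
  refine (integrable_const (K * (B * B))).mono' (hf.mul (by fun_prop)) ?_
  filter_upwards [hfK, hB] with x hx hxB
  have hcoord (k : ι) : |x k| ≤ B := (PiLp.norm_apply_le x k).trans hxB
  rw [Real.norm_eq_abs, abs_mul, abs_mul]
  exact mul_le_mul hx
    (mul_le_mul (hcoord i) (hcoord j) (abs_nonneg _) ((abs_nonneg _).trans (hcoord i)))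
    (by positivity) ((abs_nonneg _).trans hx)

theorem weightedSecondMoment_sub (hf : ∀ i j, Integrable (fun x => f x * (x i * x j)) P)
    (hg : ∀ i j, Integrable (fun x => g x * (x i * x j)) P) :
    weightedSecondMoment P f - weightedSecondMoment P g = weightedSecondMoment P (f - g) := by
  ext i j
  simp only [weightedSecondMoment, Matrix.sub_apply, of_apply, Pi.sub_apply, sub_mul]
  exact (integral_sub (hf i j) (hg i j)).symm

theorem weightedSecondMoment_one [DecidableEq ι]
    (hcov : ∀ i j, ∫ x, x i * x j ∂P = if i = j then (1 : ℝ) else 0) :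
    weightedSecondMoment P 1 = 1 := by
  ext i j
  simp [weightedSecondMoment, hcov, one_apply]

theorem toEuclideanCLM_weightedSecondMoment_apply [DecidableEq ι]
    (hf : ∀ i j, Integrable (fun x => f x * (x i * x j)) P) (v : EuclideanSpace ℝ ι) :
    toEuclideanCLM (𝕜 := ℝ) (weightedSecondMoment P f) v = ∫ x, (f x * ⟪x, v⟫) • x ∂P := by
  have hcoord (x : EuclideanSpace ℝ ι) (i : ι) :
      ((f x * ⟪x, v⟫) • x) i = ∑ j, v j * (f x * (x i * x j)) := by
    simp only [PiLp.smul_apply, smul_eq_mul, PiLp.inner_apply, RCLike.inner_apply,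
      conj_trivial, Finset.mul_sum, Finset.sum_mul]
    exact Finset.sum_congr rfl fun j _ => by ring
  ext i
  rw [eval_integral_piLp _ i, ofLp_toEuclideanCLM]
  · simp only [hcoord, mulVec, dotProduct, weightedSecondMoment, of_apply]
    rw [integral_finsetSum _ fun j _ => (hf i j).const_mul _]
    exact Finset.sum_congr rfl fun j _ => by rw [integral_const_mul, mul_comm]
  · simpa only [hcoord] using fun i => integrable_finsetSum _ fun j _ => (hf i j).const_mul _

theorem norm_toEuclideanCLM_weightedSecondMoment_le [DecidableEq ι] [IsProbabilityMeasure P]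
    (hf : AEStronglyMeasurable f P) (hfK : ∀ᵐ x ∂P, |f x| ≤ K) (hB : ∀ᵐ x ∂P, ‖x‖ ≤ B) :
    ‖toEuclideanCLM (𝕜 := ℝ) (weightedSecondMoment P f)‖ ≤ B ^ 2 * K := by
  obtain ⟨x₀, hK⟩ := hfK.exists
  refine ContinuousLinearMap.opNorm_le_bound _ (by positivity [(abs_nonneg _).trans hK])
    fun v => ?_
  rw [toEuclideanCLM_weightedSecondMoment_apply (integrable_mul_coord_mul_coord hf hfK hB)]
  have hbound : ∀ᵐ x ∂P, ‖(f x * ⟪x, v⟫) • x‖ ≤ B ^ 2 * K * ‖v‖ := by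
    filter_upwards [hfK, hB] with x hx hxB
    have hB0 : 0 ≤ B := (norm_nonneg x).trans hxB
    have hK0 : 0 ≤ K := (abs_nonneg _).trans hx
    have hinner : |⟪x, v⟫| ≤ B * ‖v‖ := (abs_real_inner_le_norm x v).trans (by gcongr)
    calc ‖(f x * ⟪x, v⟫) • x‖ = |f x| * |⟪x, v⟫| * ‖x‖ := by
          rw [norm_smul, Real.norm_eq_abs, abs_mul]
      _ ≤ K * (B * ‖v‖) * B := by gcongr
      _ = B ^ 2 * K * ‖v‖ := by ring
  simpa using norm_integral_le_of_norm_le_const hbound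

end WeightedSecondMoment

theorem abs_dotProduct_mulVec_le {s : ℕ} (R : Matrix (Fin s) (Fin s) ℝ)
    (x y : EuclideanSpace ℝ (Fin s)) :
    |(x : Fin s → ℝ) ⬝ᵥ R *ᵥ (y : Fin s → ℝ)| ≤ ‖x‖ * ‖y‖ * matOpNorm R := by
  have hinner : (x : Fin s → ℝ) ⬝ᵥ R *ᵥ (y : Fin s → ℝ) = ⟪x, toEuclideanCLM (𝕜 := ℝ) R y⟫ := by
    rw [EuclideanSpace.inner_eq_star_dotProduct, ofLp_toEuclideanCLM, star_trivial,
      dotProduct_comm]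
  rw [hinner, mul_right_comm, mul_assoc]
  exact (abs_real_inner_le_norm _ _).trans
    (mul_le_mul_of_nonneg_left ((toEuclideanCLM (𝕜 := ℝ) R).le_opNorm y) (norm_nonneg x))

theorem abs_mul_sub_mul_sq_le {a b q Q : ℝ} (hb : 0 ≤ b) (hq : |q| ≤ Q) :
    |a * q - b * q ^ 2| ≤ |a| * Q + b * Q ^ 2 :=
  calc |a * q - b * q ^ 2| ≤ |a * q| + |b * q ^ 2| := abs_sub _ _
    _ = |a| * |q| + b * |q| ^ 2 := by rw [abs_mul, abs_mul, abs_of_nonneg hb, abs_pow]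
    _ ≤ |a| * Q + b * Q ^ 2 := by gcongr

theorem abs_sub_two_mul_div_mul_sub_sq_le {n d σ q Q : ℝ} (hd : 0 ≤ d) (hdn : d < n)
    (hσ : 0 < σ) (hq : |q| ≤ Q) :
    |(n - 2 * d) / (n * σ) * q - 1 / n * q ^ 2| ≤ Q / σ + Q ^ 2 / n := by
  have hn : 0 < n := hd.trans_lt hdn
  have hQ : 0 ≤ Q := (abs_nonneg q).trans hq
  have hcoeff : |(n - 2 * d) / (n * σ)| ≤ 1 / σ := by
    rw [abs_div, abs_of_pos (mul_pos hn hσ), div_le_div_iff₀ (mul_pos hn hσ) hσ, one_mul]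
    exact mul_le_mul_of_nonneg_right (abs_le.2 ⟨by linarith, by linarith⟩) hσ.le
  calc _ ≤ |(n - 2 * d) / (n * σ)| * Q + 1 / n * Q ^ 2 :=
        abs_mul_sub_mul_sq_le (by positivity) hq
    _ ≤ 1 / σ * Q + 1 / n * Q ^ 2 := by gcongr
    _ = Q / σ + Q ^ 2 / n := by ring

theorem sigma_tilde_close_to_identity_general
    (s : ℕ) (n d : ℝ) (hd : 0 < d) (hdn : d < n)
    (R : Matrix (Fin s) (Fin s) ℝ)
    (σ : ℝ) (hσ : σ = Real.sqrt (d * (n - d) / n))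
    (B : ℝ)
    (P : Measure (EuclideanSpace ℝ (Fin s))) [IsProbabilityMeasure P]
    (hcov : ∀ i j, ∫ x0, x0 i * x0 j ∂P = if i = j then (1 : ℝ) else 0)
    (hsupp : ∀ᵐ x0 ∂P, ‖x0‖ ≤ B)
    (ν : EuclideanSpace ℝ (Fin s) → EuclideanSpace ℝ (Fin s) → ℝ)
    (hν : ∀ x y, ν x y =
      1 + ((n - 2 * d) / (n * σ)) * ((x : Fin s → ℝ) ⬝ᵥ R.mulVec (y : Fin s → ℝ))
        - (1 / n) * ((x : Fin s → ℝ) ⬝ᵥ R.mulVec (y : Fin s → ℝ)) ^ 2)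
    (SigT : EuclideanSpace ℝ (Fin s) → Matrix (Fin s) (Fin s) ℝ)
    (hSigT : ∀ x i j, SigT x i j = ∫ x0, ν x x0 * (x0 i * x0 j) ∂P) :
    ∀ x : EuclideanSpace ℝ (Fin s), ‖x‖ ≤ B →
      matOpNorm (SigT x - 1) ≤
        B ^ 2 * (B ^ 2 * matOpNorm R / σ + B ^ 4 * matOpNorm R ^ 2 / n) := by
  intro x hx
  have hσ0 : 0 < σ := hσ ▸ Real.sqrt_pos.2 <| by
    have := hd.trans hdn
    have := sub_pos.2 hdn
    positivity
  have hRnorm : 0 ≤ matOpNorm R := norm_nonneg _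
  have hB : 0 ≤ B := (norm_nonneg x).trans hx
  set K := B * B * matOpNorm R / σ + (B * B * matOpNorm R) ^ 2 / n
  have hνsub : ∀ᵐ x0 ∂P, |ν x x0 - 1| ≤ K := by
    filter_upwards [hsupp] with x0 hx0
    have hq := (abs_dotProduct_mulVec_le R x x0).trans
      (show ‖x‖ * ‖x0‖ * matOpNorm R ≤ B * B * matOpNorm R by gcongr)
    rw [hν, show ∀ a b : ℝ, 1 + a - b - 1 = a - b from fun a b => by ring]
    exact abs_sub_two_mul_div_mul_sub_sq_le hd.le hdn hσ0 hq
  have hνmeas : AEStronglyMeasurable (ν x) P := by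
    rw [show ν x = _ from funext (hν x)]
    exact Continuous.aestronglyMeasurable (by fun_prop)
  have hνbdd : ∀ᵐ x0 ∂P, |ν x x0| ≤ K + 1 := hνsub.mono fun x0 h => by
    simpa using (abs_sub_abs_le_abs_sub (ν x x0) 1).trans h
  have hSigT_sub_one : SigT x - 1 = weightedSecondMoment P (ν x - 1) := by
    rw [show SigT x = weightedSecondMoment P (ν x) from Matrix.ext (hSigT x),
      ← weightedSecondMoment_one hcov]
    exact weightedSecondMoment_sub (integrable_mul_coord_mul_coord hνmeas hνbdd hsupp)
      (integrable_mul_coord_mul_coord (f := 1) aestronglyMeasurable_const (K := 1) (by simp) hsupp)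
  calc matOpNorm (SigT x - 1) ≤ B ^ 2 * K := hSigT_sub_one ▸
        norm_toEuclideanCLM_weightedSecondMoment_le (hνmeas.sub aestronglyMeasurable_const)
          hνsub hsupp
    _ = _ := by ring

/-- if `P` has mean zero, identity covariance and support in the ball
of radius `B`, then `‖Σ̃(x) − I‖ ≤ B²(B²‖R‖/σ + B⁴‖R‖²/n)` for all `‖x‖ ≤ B`. -/
theorem sigma_tilde_close_to_identity
    (s : ℕ) (n d : ℝ) (hn : 1 ≤ n) (hd : 0 < d) (hdn : d < n)
    (R : Matrix (Fin s) (Fin s) ℝ) (hR : R.IsSymm)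
    (σ : ℝ) (hσ : σ = Real.sqrt (d * (n - d) / n))
    (B : ℝ) (hB : 0 < B)
    (P : Measure (EuclideanSpace ℝ (Fin s))) [IsProbabilityMeasure P]
    (hmean : ∀ k, ∫ x0, x0 k ∂P = 0)
    (hcov : ∀ i j, ∫ x0, x0 i * x0 j ∂P = if i = j then (1 : ℝ) else 0)
    (hsupp : ∀ᵐ x0 ∂P, ‖x0‖ ≤ B)
    (ν : EuclideanSpace ℝ (Fin s) → EuclideanSpace ℝ (Fin s) → ℝ)
    (hν : ∀ x y, ν x y =
      1 + ((n - 2 * d) / (n * σ)) * ((x : Fin s → ℝ) ⬝ᵥ R.mulVec (y : Fin s → ℝ))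
        - (1 / n) * ((x : Fin s → ℝ) ⬝ᵥ R.mulVec (y : Fin s → ℝ)) ^ 2)
    (SigT : EuclideanSpace ℝ (Fin s) → Matrix (Fin s) (Fin s) ℝ)
    (hSigT : ∀ x i j, SigT x i j = ∫ x0, ν x x0 * (x0 i * x0 j) ∂P) :
    ∀ x : EuclideanSpace ℝ (Fin s), ‖x‖ ≤ B →
      matOpNorm (SigT x - 1) ≤
        B ^ 2 * (B ^ 2 * matOpNorm R / σ + B ^ 4 * matOpNorm R ^ 2 / n) :=
  sigma_tilde_close_to_identity_general s n d hd hdn R σ hσ B P hcov hsupp ν hν SigT hSigT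
end

section
/- (Proposition 1, equation (10), quantitative form.) Let P be a probability distribution on ℝ^s with mean zero, identity covariance, and support in the closed ball of radius B. Let R be a symmetric s×s real matrix with eigenvalues r_1, …, r_s, and let R̄ (resp. R̲) be the symmetric matrix with the same eigenvectors as R and eigenvalues max(|r_i|,1) (resp. min(|r_i|,1)). Let 0 < d < n, σ = √(d(n−d)/n), ν(x,x̃) = 1 + ((n−2d)/(nσ))·xᵀRx̃ − (1/n)(xᵀRx̃)², Σ̃(x) = E_{X₀∼P}[ν(x,X₀)·X₀X₀ᵀ], M = (I − R̄⁻²)^{1/2} (positive semidefinite square root), and Σ(x) = M Σ̃(x) M + R̄⁻¹R̲²R̄⁻¹. Then for every x with ‖x‖ ≤ B, ‖Σ(x) − R̲²‖ ≤ B⁴‖R‖/σ + B⁶‖R‖²/n, where ‖·‖ is the operator norm. In particular Σ(x) = R̲² + O(σ⁻¹ + n⁻¹) uniformly over the support of P. -/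
/-!
Write `M = (I − R̄⁻²)^{1/2}`. In the eigenbasis of `R` either `R̄ = 1` or `R̲ = 1`, so
`R̄⁻¹R̲²R̄⁻¹ − R̲² = R̄⁻² − I = −M²`, whence `Σ(x) − R̲² = M (Σ̃(x) − I) M`; and `‖M‖ ≤ 1` because
`M² = I − R̄⁻²` has eigenvalues in `[0, 1)`. By the identity covariance,
`Σ̃(x) − I = E[(ν(x, X₀) − 1) X₀X₀ᵀ]`, and on the ball of radius `B`, where `|xᵀRX₀| ≤ B²‖R‖`,
`|ν − 1| ≤ B²‖R‖/σ + B⁴‖R‖²/n` since `|n − 2d| ≤ n`. As `‖X₀X₀ᵀ‖ ≤ B²`, this gives the bound.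
-/

open Matrix MeasureTheory

open scoped Matrix.Norms.L2Operator RealInnerProductSpace

theorem IsSelfAdjoint.norm_le_one_of_norm_mul_self_le_one {E : Type*} [NormedRing E] [StarRing E]
    [CStarRing E] {a : E} (ha : IsSelfAdjoint a) (h : ‖a * a‖ ≤ 1) : ‖a‖ ≤ 1 := by
  rw [ha.norm_mul_self] at h
  nlinarith [norm_nonneg a]

section Conjugation

variable {ι : Type*} [Fintype ι] [DecidableEq ι] {U : Matrix ι ι ℝ}

noncomputable def conjDiagonal (hU : U ∈ orthogonalGroup ι ℝ) : (ι → ℝ) →+* Matrix ι ι ℝ :=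
  (Unitary.conjStarAlgAut ℝ (Matrix ι ι ℝ) ⟨U, hU⟩ : Matrix ι ι ℝ →+* Matrix ι ι ℝ).comp
    (diagonalRingHom ι ℝ)

variable (hU : U ∈ orthogonalGroup ι ℝ)

theorem conjDiagonal_apply (g : ι → ℝ) : conjDiagonal hU g = U * diagonal g * Uᵀ := by
  simp [conjDiagonal, star_eq_conjTranspose]

theorem conjDiagonal_inv {g : ι → ℝ} (hg : ∀ i, g i ≠ 0) :
    (conjDiagonal hU g)⁻¹ = conjDiagonal hU g⁻¹ := by
  refine inv_eq_right_inv ?_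
  rw [← map_mul, ← map_one (conjDiagonal hU)]
  congr 1 with i
  exact mul_inv_cancel₀ (hg i)

theorem l2_opNorm_conjDiagonal (g : ι → ℝ) : ‖conjDiagonal hU g‖ = ‖g‖ := by
  simp only [conjDiagonal, RingHom.comp_apply, RingHom.coe_coe, Unitary.conjStarAlgAut_apply]
  rw [CStarRing.norm_mul_mem_unitary _ (Unitary.star_mem hU), CStarRing.norm_mem_unitary_mul _ hU]
  exact l2_opNorm_diagonal g

end Conjugation

section Truncation

theorem inv_mul_min_sq_mul_inv_sub_min_sq {ι : Type*} (r : ι → ℝ) :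
    (fun i => max |r i| 1)⁻¹ * ((fun i => min |r i| 1) * (fun i => min |r i| 1)) *
        (fun i => max |r i| 1)⁻¹ - (fun i => min |r i| 1) * (fun i => min |r i| 1) =
      ((fun i => max |r i| 1) * (fun i => max |r i| 1))⁻¹ - 1 := by
  ext i
  simp only [Pi.sub_apply, Pi.mul_apply, Pi.inv_apply, Pi.one_apply]
  rcases le_total |r i| 1 with h | h
  · simp [max_eq_right h]
  · rw [min_eq_right h, mul_inv]
    ring

variable {ι : Type*} [Fintype ι] [DecidableEq ι] {U Rbar Runder : Matrix ι ι ℝ} {r : ι → ℝ}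

theorem inv_mul_self_eq_conjDiagonal (hU : U ∈ orthogonalGroup ι ℝ)
    (hRbar : Rbar = U * diagonal (fun i => max |r i| 1) * Uᵀ) :
    (Rbar * Rbar)⁻¹ = conjDiagonal hU ((fun i => max |r i| 1) * fun i => max |r i| 1)⁻¹ := by
  have hpos : ∀ i, 0 < max |r i| 1 := fun i => zero_lt_one.trans_le (le_max_right _ _)
  rw [hRbar, ← conjDiagonal_apply hU, ← map_mul]
  exact conjDiagonal_inv hU fun i => (mul_pos (hpos i) (hpos i)).ne'

theorem inv_mul_sq_mul_inv_sub_sq (hU : U ∈ orthogonalGroup ι ℝ)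
    (hRbar : Rbar = U * diagonal (fun i => max |r i| 1) * Uᵀ)
    (hRunder : Runder = U * diagonal (fun i => min |r i| 1) * Uᵀ) :
    Rbar⁻¹ * (Runder * Runder) * Rbar⁻¹ - Runder * Runder = (Rbar * Rbar)⁻¹ - 1 := by
  have hne : ∀ i, max |r i| 1 ≠ 0 := fun i => (zero_lt_one.trans_le (le_max_right _ _)).ne'
  rw [inv_mul_self_eq_conjDiagonal hU hRbar, hRbar, hRunder, ← conjDiagonal_apply hU,
    ← conjDiagonal_apply hU, conjDiagonal_inv hU hne, ← map_mul, ← map_mul, ← map_mul, ← map_sub,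
    ← map_one (conjDiagonal hU), ← map_sub, inv_mul_min_sq_mul_inv_sub_min_sq]

theorem l2_opNorm_one_sub_inv_mul_self_le_one (hU : U ∈ orthogonalGroup ι ℝ)
    (hRbar : Rbar = U * diagonal (fun i => max |r i| 1) * Uᵀ) : ‖1 - (Rbar * Rbar)⁻¹‖ ≤ 1 := by
  rw [inv_mul_self_eq_conjDiagonal hU hRbar, ← map_one (conjDiagonal hU), ← map_sub,
    l2_opNorm_conjDiagonal]
  refine (pi_norm_le_iff_of_nonneg zero_le_one).mpr fun i => ?_
  have hsq : 1 ≤ max |r i| 1 * max |r i| 1 :=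
    one_le_mul_of_one_le_of_one_le (le_max_right _ _) (le_max_right _ _)
  have hinv : 0 < (max |r i| 1 * max |r i| 1)⁻¹ := inv_pos.mpr (zero_lt_one.trans_le hsq)
  simp only [Pi.sub_apply, Pi.one_apply, Pi.inv_apply, Pi.mul_apply, Real.norm_eq_abs]
  rw [abs_le]
  constructor <;> linarith [inv_le_one_of_one_le₀ hsq]

end Truncation

theorem abs_dotProduct_mulVec_le_s7 {ι : Type*} [Fintype ι] [DecidableEq ι] (A : Matrix ι ι ℝ)
    (x y : EuclideanSpace ℝ ι) : |(x : ι → ℝ) ⬝ᵥ A *ᵥ (y : ι → ℝ)| ≤ ‖x‖ * ‖A‖ * ‖y‖ := by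
  rw [← inner_toEuclideanCLM, mul_assoc]
  exact (abs_real_inner_le_norm _ _).trans (by gcongr; exact l2_opNorm_mulVec A y)

theorem abs_mul_sub_sq_div_le {n d σ q q₀ : ℝ} (hd : 0 < d) (hdn : d < n) (hσ : 0 < σ)
    (hq : |q| ≤ q₀) :
    |(n - 2 * d) / (n * σ) * q - 1 / n * q ^ 2| ≤ q₀ / σ + q₀ ^ 2 / n := by
  have hn : 0 < n := hd.trans hdn
  have hcoeff : |(n - 2 * d) / (n * σ)| ≤ 1 / σ := by
    have hnum : |n - 2 * d| ≤ n := abs_le.mpr ⟨by linarith, by linarith⟩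
    rw [abs_div, abs_of_pos (mul_pos hn hσ), div_le_div_iff₀ (mul_pos hn hσ) hσ, one_mul]
    gcongr
  have hsq : q ^ 2 ≤ q₀ ^ 2 := sq_le_sq' (abs_le.mp hq).1 (abs_le.mp hq).2
  calc |(n - 2 * d) / (n * σ) * q - 1 / n * q ^ 2|
      ≤ |(n - 2 * d) / (n * σ)| * |q| + 1 / n * q ^ 2 := by
        refine (abs_sub _ _).trans_eq ?_
        rw [abs_mul, abs_mul, abs_of_pos (by positivity : 0 < 1 / n), abs_sq]
    _ ≤ 1 / σ * q₀ + 1 / n * q₀ ^ 2 := by gcongr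
    _ = q₀ / σ + q₀ ^ 2 / n := by ring

theorem Continuous.integrable_of_ae_norm_le {X E : Type*} [NormedAddCommGroup X] [ProperSpace X]
    [MeasurableSpace X] [OpensMeasurableSpace X] [NormedAddCommGroup E] {P : Measure X}
    [IsFiniteMeasure P] {B : ℝ} {f : X → E} (hf : Continuous f) (hsupp : ∀ᵐ y ∂P, ‖y‖ ≤ B) :
    Integrable f P := by
  have hball : ∀ᵐ y ∂P, y ∈ Metric.closedBall 0 B := by simpa using hsupp
  rw [← Measure.restrict_eq_self_of_ae_mem hball]
  exact hf.continuousOn.integrableOn_compact (isCompact_closedBall 0 B)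

section SecondMoment

variable {ι : Type*} [Fintype ι] [DecidableEq ι] {P : Measure (EuclideanSpace ℝ ι)} {B : ℝ}

noncomputable def secondMoment (P : Measure (EuclideanSpace ℝ ι)) (f : EuclideanSpace ℝ ι → ℝ) :
    Matrix ι ι ℝ :=
  of fun i j => ∫ y, f y * (y i * y j) ∂P

theorem secondMoment_sub_one [IsFiniteMeasure P] {f : EuclideanSpace ℝ ι → ℝ}
    (hf : Continuous f) (hsupp : ∀ᵐ y ∂P, ‖y‖ ≤ B)
    (hcov : ∀ i j, ∫ y, y i * y j ∂P = if i = j then (1 : ℝ) else 0) :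
    secondMoment P f - 1 = secondMoment P (f - 1) := by
  ext i j
  rw [Matrix.sub_apply, one_apply, ← hcov, secondMoment, secondMoment, of_apply, of_apply,
    ← integral_sub]
  · congr 1 with y
    simp only [Pi.sub_apply, Pi.one_apply]
    ring
  · exact (by fun_prop : Continuous _).integrable_of_ae_norm_le hsupp
  · exact (by fun_prop : Continuous _).integrable_of_ae_norm_le hsupp

theorem toEuclideanCLM_secondMoment [IsFiniteMeasure P] {f : EuclideanSpace ℝ ι → ℝ}
    (hf : Continuous f) (hsupp : ∀ᵐ y ∂P, ‖y‖ ≤ B) (v : EuclideanSpace ℝ ι) :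
    toEuclideanCLM (𝕜 := ℝ) (secondMoment P f) v
      = ∫ y, (f y * ⟪y, v⟫) • y ∂P := by
  ext i
  have hint : Integrable (fun y : EuclideanSpace ℝ ι => (f y * ⟪y, v⟫) • y) P :=
    (by fun_prop : Continuous _).integrable_of_ae_norm_le hsupp
  have hcoord := (PiLp.proj (𝕜 := ℝ) 2 (fun _ : ι => ℝ) i).integral_comp_comm hint
  simp only [PiLp.proj_apply] at hcoord
  rw [← hcoord]
  simp only [secondMoment, ofLp_toEuclideanCLM, mulVec, dotProduct, of_apply, ← integral_mul_const]
  rw [← integral_finsetSum]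
  · congr 1 with y
    simp [PiLp.inner_apply, Finset.mul_sum, mul_comm, mul_left_comm]
  · intro j _
    exact ((by fun_prop : Continuous _).integrable_of_ae_norm_le hsupp)

theorem l2_opNorm_secondMoment_le [IsProbabilityMeasure P] {f : EuclideanSpace ℝ ι → ℝ}
    (hf : Continuous f) {K : ℝ} (hsupp : ∀ᵐ y ∂P, ‖y‖ ≤ B) (hfK : ∀ y, ‖y‖ ≤ B → |f y| ≤ K) :
    ‖secondMoment P f‖ ≤ K * B ^ 2 := by
  obtain ⟨y₀, hy₀⟩ := hsupp.exists
  have hK : 0 ≤ K := (abs_nonneg _).trans (hfK y₀ hy₀)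
  rw [← l2_opNorm_toEuclideanCLM]
  refine ContinuousLinearMap.opNorm_le_bound _ (by positivity) fun v => ?_
  rw [toEuclideanCLM_secondMoment hf hsupp]
  refine (norm_integral_le_of_norm_le_const (C := K * B ^ 2 * ‖v‖) ?_).trans_eq (by simp)
  filter_upwards [hsupp] with y hy
  calc ‖(f y * ⟪y, v⟫) • y‖ = |f y| * |⟪y, v⟫| * ‖y‖ := by
        rw [norm_smul, Real.norm_eq_abs, abs_mul]
    _ ≤ K * (B * ‖v‖) * B := by
        have hinner : |⟪y, v⟫| ≤ B * ‖v‖ := (abs_real_inner_le_norm y v).trans (by gcongr)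
        have hB : 0 ≤ B := (norm_nonneg _).trans hy
        gcongr
        exact hfK y hy
    _ = K * B ^ 2 * ‖v‖ := by ring

end SecondMoment

theorem sigma_close_to_runder_sq_general
    (s : ℕ) (n d : ℝ) (hd : 0 < d) (hdn : d < n)
    (σ : ℝ) (hσ : σ = Real.sqrt (d * (n - d) / n))
    (B : ℝ)
    -- the symmetric matrix `R` and its truncations `R̄`, `R̲`
    (R U Rbar Runder M : Matrix (Fin s) (Fin s) ℝ) (r : Fin s → ℝ)
    (hU : U ∈ Matrix.orthogonalGroup (Fin s) ℝ)
    (hRbar : Rbar = U * Matrix.diagonal (fun i => max |r i| 1) * Uᵀ)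
    (hRunder : Runder = U * Matrix.diagonal (fun i => min |r i| 1) * Uᵀ)
    -- `M` is the positive semidefinite square root of `I − R̄⁻²`
    (hM : M.PosSemidef)
    (hMsq : M * M = 1 - (Rbar * Rbar)⁻¹)
    -- `P` has mean zero, identity covariance and support in the ball of radius `B`
    (P : Measure (EuclideanSpace ℝ (Fin s))) [IsProbabilityMeasure P]
    (hcov : ∀ i j, ∫ x0, x0 i * x0 j ∂P = if i = j then (1 : ℝ) else 0)
    (hsupp : ∀ᵐ x0 ∂P, ‖x0‖ ≤ B)
    -- the variance function and the two covariance matrices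
    (ν : EuclideanSpace ℝ (Fin s) → EuclideanSpace ℝ (Fin s) → ℝ)
    (hν : ∀ x y, ν x y =
      1 + ((n - 2 * d) / (n * σ)) * ((x : Fin s → ℝ) ⬝ᵥ R.mulVec (y : Fin s → ℝ))
        - (1 / n) * ((x : Fin s → ℝ) ⬝ᵥ R.mulVec (y : Fin s → ℝ)) ^ 2)
    (SigT : EuclideanSpace ℝ (Fin s) → Matrix (Fin s) (Fin s) ℝ)
    (hSigT : ∀ x i j, SigT x i j = ∫ x0, ν x x0 * (x0 i * x0 j) ∂P)
    (Sig : EuclideanSpace ℝ (Fin s) → Matrix (Fin s) (Fin s) ℝ)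
    (hSig : ∀ x, Sig x = M * SigT x * M + Rbar⁻¹ * (Runder * Runder) * Rbar⁻¹) :
    ∀ x : EuclideanSpace ℝ (Fin s), ‖x‖ ≤ B →
      matOpNorm (Sig x - Runder * Runder) ≤
        B ^ 4 * matOpNorm R / σ + B ^ 6 * matOpNorm R ^ 2 / n := by
  intro x hx
  change ‖Sig x - Runder * Runder‖ ≤ B ^ 4 * ‖R‖ / σ + B ^ 6 * ‖R‖ ^ 2 / n
  have hB : 0 ≤ B := (norm_nonneg x).trans hx
  have hσ0 : 0 < σ := hσ ▸ Real.sqrt_pos.mpr (div_pos (mul_pos hd (sub_pos.mpr hdn)) (hd.trans hdn))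
  have hSigT' : SigT x = secondMoment P (ν x) := Matrix.ext (hSigT x)
  have hcentre : Sig x - Runder * Runder = M * (SigT x - 1) * M := by
    rw [hSig, add_sub_assoc, inv_mul_sq_mul_inv_sub_sq hU hRbar hRunder, mul_sub, sub_mul, mul_one,
      hMsq]
    abel
  have hMnorm : ‖M‖ ≤ 1 := hM.isHermitian.isSelfAdjoint.norm_le_one_of_norm_mul_self_le_one
    (hMsq ▸ l2_opNorm_one_sub_inv_mul_self_le_one hU hRbar)
  have hνcont : Continuous (ν x) := by
    rw [funext (hν x)]
    fun_prop
  have hνbound : ∀ y : EuclideanSpace ℝ (Fin s), ‖y‖ ≤ B →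
      |(ν x - 1) y| ≤ B ^ 2 * ‖R‖ / σ + (B ^ 2 * ‖R‖) ^ 2 / n := by
    intro y hy
    have hq := (abs_dotProduct_mulVec_le_s7 R x y).trans
      (by gcongr : ‖x‖ * ‖R‖ * ‖y‖ ≤ B * ‖R‖ * B)
    rw [Pi.sub_apply, Pi.one_apply, hν, sub_right_comm, add_sub_cancel_left]
    exact abs_mul_sub_sq_div_le hd hdn hσ0 (hq.trans_eq (by ring))
  calc ‖Sig x - Runder * Runder‖ = ‖M * (SigT x - 1) * M‖ := by rw [hcentre]
    _ ≤ ‖M‖ * ‖SigT x - 1‖ * ‖M‖ := norm_mul₃_le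
    _ ≤ 1 * ‖SigT x - 1‖ * 1 := by gcongr
    _ ≤ (B ^ 2 * ‖R‖ / σ + (B ^ 2 * ‖R‖) ^ 2 / n) * B ^ 2 := by
        rw [one_mul, mul_one, hSigT', secondMoment_sub_one hνcont hsupp hcov]
        exact l2_opNorm_secondMoment_le (hνcont.sub continuous_const) hsupp hνbound
    _ = B ^ 4 * ‖R‖ / σ + B ^ 6 * ‖R‖ ^ 2 / n := by ring

/-- Proposition 1, equation (10), quantitative form: with
`Σ(x) = (I − R̄⁻²)^{1/2} Σ̃(x) (I − R̄⁻²)^{1/2} + R̄⁻¹R̲²R̄⁻¹`, for every `‖x‖ ≤ B`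
one has `‖Σ(x) − R̲²‖ ≤ B⁴‖R‖/σ + B⁶‖R‖²/n` in operator norm. -/
theorem sigma_close_to_runder_sq
    (s : ℕ) (n d : ℝ) (hn : 1 ≤ n) (hd : 0 < d) (hdn : d < n)
    (σ : ℝ) (hσ : σ = Real.sqrt (d * (n - d) / n))
    (B : ℝ) (hB : 0 < B)
    -- the symmetric matrix `R` and its truncations `R̄`, `R̲`
    (R U Rbar Runder M : Matrix (Fin s) (Fin s) ℝ) (r : Fin s → ℝ)
    (hU : U ∈ Matrix.orthogonalGroup (Fin s) ℝ)
    (hR : R = U * Matrix.diagonal r * Uᵀ)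
    (hRbar : Rbar = U * Matrix.diagonal (fun i => max |r i| 1) * Uᵀ)
    (hRunder : Runder = U * Matrix.diagonal (fun i => min |r i| 1) * Uᵀ)
    -- `M` is the positive semidefinite square root of `I − R̄⁻²`
    (hM : M.PosSemidef)
    (hMsq : M * M = 1 - (Rbar * Rbar)⁻¹)
    -- `P` has mean zero, identity covariance and support in the ball of radius `B`
    (P : Measure (EuclideanSpace ℝ (Fin s))) [IsProbabilityMeasure P]
    (hmean : ∀ k, ∫ x0, x0 k ∂P = 0)
    (hcov : ∀ i j, ∫ x0, x0 i * x0 j ∂P = if i = j then (1 : ℝ) else 0)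
    (hsupp : ∀ᵐ x0 ∂P, ‖x0‖ ≤ B)
    -- the variance function and the two covariance matrices
    (ν : EuclideanSpace ℝ (Fin s) → EuclideanSpace ℝ (Fin s) → ℝ)
    (hν : ∀ x y, ν x y =
      1 + ((n - 2 * d) / (n * σ)) * ((x : Fin s → ℝ) ⬝ᵥ R.mulVec (y : Fin s → ℝ))
        - (1 / n) * ((x : Fin s → ℝ) ⬝ᵥ R.mulVec (y : Fin s → ℝ)) ^ 2)
    (SigT : EuclideanSpace ℝ (Fin s) → Matrix (Fin s) (Fin s) ℝ)
    (hSigT : ∀ x i j, SigT x i j = ∫ x0, ν x x0 * (x0 i * x0 j) ∂P)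
    (Sig : EuclideanSpace ℝ (Fin s) → Matrix (Fin s) (Fin s) ℝ)
    (hSig : ∀ x, Sig x = M * SigT x * M + Rbar⁻¹ * (Runder * Runder) * Rbar⁻¹) :
    ∀ x : EuclideanSpace ℝ (Fin s), ‖x‖ ≤ B →
      matOpNorm (Sig x - Runder * Runder) ≤
        B ^ 4 * matOpNorm R / σ + B ^ 6 * matOpNorm R ^ 2 / n :=
  sigma_close_to_runder_sq_general s n d hd hdn σ hσ B R U Rbar Runder M r hU hRbar hRunder hM hMsq
    P hcov hsupp ν hν SigT hSigT Sig hSig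
end
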